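/- arXiv:1701.05695 — 2 statements merged into one kernel-verified Lean document; each statement's English description precedes it below -/
import Mathlib

section
/- Let σ > 0, t > 0, μ ∈ ℝ, and K, K' > 0. Then ∫_ℝ max(e^{2 log K − y} − K', 0) · (2πσ²t)^{−1/2} exp(−(y − (log K + μt))²/(2σ²t)) dy = K e^{(σ²/2 − μ)t} 𝒩((log(K/K') − (μ − σ²)t)/(σ√t)) − K' 𝒩((log(K/K') − μt)/(σ√t)). -/
open MeasureTheory

/-- The standard normal cumulative distribution function. -/
noncomputable def stdNormalCdf (x : ℝ) : ℝ :=
  ∫ u in Set.Iio x, (Real.sqrt (2 * Real.pi))⁻¹ * Real.exp (-u ^ 2 / 2)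

/-!
The payoff `max (e^{c-y} - k) 0` vanishes exactly for `y ≥ c - log k`, so the integral is one
over the half-line `y < c - log k`. There, completing the square turns `e^{c-y}` times the
`𝒩(m, v)` density into `e^{c-m+v/2}` times the `𝒩(m-v, v)` density, and an affine substitution
turns each Gaussian integral over a half-line into a value of the standard normal cdf.
-/

open ProbabilityTheory Real Set NNReal

lemma image_affine_Iio (m : ℝ) {s : ℝ} (hs : 0 < s) (b : ℝ) :
    (fun u => m + s * u) '' Iio ((b - m) / s) = Iio b := by
  ext y
  simp only [mem_image, mem_Iio]
  constructor
  · rintro ⟨u, hu, rfl⟩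
    linarith [(lt_div_iff₀' hs).1 hu]
  · intro hy
    exact ⟨(y - m) / s, by gcongr, by field_simp; ring⟩

lemma setIntegral_Iio_gaussianPDFReal (m : ℝ) {v : ℝ≥0} (hv : v ≠ 0) (b : ℝ) :
    ∫ y in Iio b, gaussianPDFReal m v y = stdNormalCdf ((b - m) / √v) := by
  have hs : 0 < √(v : ℝ) := Real.sqrt_pos.2 (by positivity)
  rw [← image_affine_Iio m hs b, integral_image_eq_integral_abs_deriv_smul measurableSet_Iio
      (f := fun u => m + √v * u)
      (fun u _ => by simpa using ((hasDerivAt_id u).const_mul _ |>.const_add m).hasDerivWithinAt)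
      (fun x _ y _ h => by simpa [hs.ne'] using h), stdNormalCdf]
  refine setIntegral_congr_fun measurableSet_Iio fun u _ => ?_
  have hsq : (√(v : ℝ)) ^ 2 = v := Real.sq_sqrt v.coe_nonneg
  have hexp : -(m + √v * u - m) ^ 2 / (2 * v) = -u ^ 2 / 2 := by
    rw [add_sub_cancel_left, mul_pow, hsq]
    field_simp
  rw [smul_eq_mul, abs_of_pos hs, gaussianPDFReal, hexp,
    show (2 * π * v : ℝ) = 2 * π * (√(v : ℝ)) ^ 2 by rw [hsq],
    Real.sqrt_mul (by positivity), Real.sqrt_sq hs.le]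
  field_simp

lemma exp_sub_mul_gaussianPDFReal (c m : ℝ) (v : ℝ≥0) (y : ℝ) :
    exp (c - y) * gaussianPDFReal m v y
      = exp (c - m + v / 2) * gaussianPDFReal (m - v) v y := by
  rcases eq_or_ne v 0 with rfl | hv
  · simp
  have hv' : (v : ℝ) ≠ 0 := by exact_mod_cast hv
  simp only [gaussianPDFReal]
  rw [mul_left_comm, ← exp_add, mul_left_comm, ← exp_add]
  congr 2
  field_simp
  ring

lemma max_exp_sub_sub_zero_eq_indicator (c : ℝ) {k : ℝ} (hk : 0 < k) (y : ℝ) :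
    max (exp (c - y) - k) 0 = (Iio (c - log k)).indicator (fun y => exp (c - y) - k) y := by
  by_cases hy : y < c - log k
  · rw [indicator_of_mem (show y ∈ Iio (c - log k) from hy), max_eq_left]
    rw [sub_nonneg, ← exp_log hk]
    exact exp_le_exp.2 (by linarith)
  · rw [indicator_of_notMem (show y ∉ Iio (c - log k) from hy), max_eq_right]
    rw [sub_nonpos, ← exp_log hk]
    exact exp_le_exp.2 (by linarith [not_lt.1 hy])

theorem integral_max_exp_sub_mul_gaussianPDFReal (c m : ℝ) {v : ℝ≥0} (hv : v ≠ 0) {k : ℝ}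
    (hk : 0 < k) :
    ∫ y, max (exp (c - y) - k) 0 * gaussianPDFReal m v y
      = exp (c - m + v / 2) * stdNormalCdf ((c - log k - (m - v)) / √v)
        - k * stdNormalCdf ((c - log k - m) / √v) := by
  simp_rw [max_exp_sub_sub_zero_eq_indicator c hk, ← indicator_mul_left]
  rw [integral_indicator measurableSet_Iio]
  simp_rw [sub_mul, exp_sub_mul_gaussianPDFReal]
  rw [integral_sub ((integrable_gaussianPDFReal _ _).const_mul _).integrableOn
      ((integrable_gaussianPDFReal _ _).const_mul _).integrableOn,
    integral_const_mul, integral_const_mul, setIntegral_Iio_gaussianPDFReal _ hv,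
    setIntegral_Iio_gaussianPDFReal _ hv]

/-- For `σ, t, K, K' > 0` and `μ ∈ ℝ`,
`∫ max(e^{2 log K − y} − K',0) (2πσ²t)^{−1/2} exp(−(y − (log K + μt))²/(2σ²t)) dy
  = K e^{(σ²/2−μ)t} 𝒩((log(K/K') − (μ−σ²)t)/(σ√t)) − K' 𝒩((log(K/K') − μt)/(σ√t))`. -/
theorem stmt_14 (σ t μ K K' : ℝ) (hσ : 0 < σ) (ht : 0 < t) (hK : 0 < K) (hK' : 0 < K') :
    (∫ y : ℝ, max (Real.exp (2 * Real.log K - y) - K') 0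
        * ((Real.sqrt (2 * Real.pi * σ ^ 2 * t))⁻¹
          * Real.exp (-(y - (Real.log K + μ * t)) ^ 2 / (2 * σ ^ 2 * t))))
      = K * Real.exp ((σ ^ 2 / 2 - μ) * t)
          * stdNormalCdf ((Real.log (K / K') - (μ - σ ^ 2) * t) / (σ * Real.sqrt t))
        - K' * stdNormalCdf ((Real.log (K / K') - μ * t) / (σ * Real.sqrt t)) := by
  set v : ℝ≥0 := ⟨σ ^ 2 * t, by positivity⟩
  have hv_coe : (v : ℝ) = σ ^ 2 * t := rfl
  have hv : v ≠ 0 := by rw [← NNReal.coe_ne_zero, hv_coe]; positivity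
  have hdensity (y : ℝ) :
      (√(2 * π * σ ^ 2 * t))⁻¹ * exp (-(y - (log K + μ * t)) ^ 2 / (2 * σ ^ 2 * t))
        = gaussianPDFReal (log K + μ * t) v y := by
    simp only [gaussianPDFReal, hv_coe, mul_assoc]
  have hsqrt : √(v : ℝ) = σ * √t := by
    rw [hv_coe, Real.sqrt_mul (by positivity), Real.sqrt_sq hσ.le]
  have hweight : exp (2 * log K - (log K + μ * t) + v / 2) = K * exp ((σ ^ 2 / 2 - μ) * t) := by
    rw [hv_coe, show 2 * log K - (log K + μ * t) + σ ^ 2 * t / 2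
      = log K + (σ ^ 2 / 2 - μ) * t by ring, exp_add, exp_log hK]
  simp_rw [hdensity]
  rw [integral_max_exp_sub_mul_gaussianPDFReal _ _ hv hK', hweight, hsqrt,
    log_div hK.ne' hK'.ne', hv_coe]
  ring_nf
end

section
/- Let σ > 0, t > 0, μ ∈ ℝ, K, K' > 0, and x ∈ ℝ. Then ∫_ℝ (−μ) ∂_y[(2πσ²t)^{−1/2} exp(−(x−y)²/(2σ²t))] · max(e^{2 log K − y} − K', 0) dy = −μ e^{2 log K − x + σ²t/2} 𝒩((2 log K − log K' − x + σ²t)/(σ√t)). -/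
/-! With `a := 2 log K`, the payoff `max (exp (a - y) - K') 0` vanishes for `y ≥ b := a - log K'`,
so the integral runs over `(-∞, b]`, where integration by parts moves the derivative from the
kernel onto `exp (a - y) - K'`: the boundary terms vanish at `b` because the payoff does, and at
`-∞` because the kernel does. What is left is `∫_{-∞}^b p(y) e^{a-y} dy`, and completing the
square, `p_σ(t,m,y) e^{a-y} = e^{a-m+σ²t/2} p_σ(t,m-σ²t,y)`, makes it a normal distribution
function. -/

open MeasureTheory

/-- The Gaussian kernel `p_σ(t,x,y) := (2πσ²t)^{−1/2} exp(−(x−y)²/(2σ²t))`. -/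
noncomputable def gaussKer (σ t x y : ℝ) : ℝ :=
  (Real.sqrt (2 * Real.pi * σ ^ 2 * t))⁻¹ * Real.exp (-(x - y) ^ 2 / (2 * σ ^ 2 * t))

open Set Filter Topology Real

noncomputable def stdNormalPdf (u : ℝ) : ℝ := (√(2 * π))⁻¹ * exp (-u ^ 2 / 2)

lemma continuous_stdNormalPdf : Continuous stdNormalPdf := by
  unfold stdNormalPdf
  fun_prop

lemma integrable_stdNormalPdf : Integrable stdNormalPdf := by
  refine ((integrable_exp_neg_mul_sq (b := 1 / 2) (by norm_num)).const_mul (√(2 * π))⁻¹).congr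
    (.of_forall fun u => ?_)
  simp only [stdNormalPdf]
  ring_nf

lemma integrable_mul_stdNormalPdf : Integrable fun u => u * stdNormalPdf u := by
  refine ((integrable_mul_exp_neg_mul_sq (b := 1 / 2) (by norm_num)).const_mul
    (√(2 * π))⁻¹).congr (.of_forall fun u => ?_)
  simp only [stdNormalPdf]
  ring_nf

lemma tendsto_stdNormalPdf_atBot : Tendsto stdNormalPdf atBot (𝓝 0) := by
  have hsq : Tendsto (fun u : ℝ => -u ^ 2 / 2) atBot atBot := by
    refine (((tendsto_pow_atTop two_ne_zero).comp tendsto_neg_atBot_atTop).atTop_div_const_of_neg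
      (by norm_num : (-2 : ℝ) < 0)).congr fun u => ?_
    simp only [Function.comp, neg_sq]
    ring
  have h := (tendsto_exp_atBot.comp hsq).const_mul (√(2 * π))⁻¹
  rw [mul_zero] at h
  exact h

lemma stdNormalCdf_eq_integral_Iic (z : ℝ) : stdNormalCdf z = ∫ u in Iic z, stdNormalPdf u :=
  integral_Iic_eq_integral_Iio.symm

lemma hasDerivAt_stdNormalCdf (z : ℝ) : HasDerivAt stdNormalCdf (stdNormalPdf z) z := by
  have hsplit (z : ℝ) :
      stdNormalCdf z = (∫ u in Iic 0, stdNormalPdf u) + ∫ u in 0..z, stdNormalPdf u := by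
    rw [stdNormalCdf_eq_integral_Iic, ← intervalIntegral.integral_Iic_sub_Iic
      integrable_stdNormalPdf.integrableOn integrable_stdNormalPdf.integrableOn]
    ring
  rw [funext hsplit]
  exact (intervalIntegral.integral_hasDerivAt_right integrable_stdNormalPdf.intervalIntegrable
    (continuous_stdNormalPdf.stronglyMeasurableAtFilter _ _)
    continuous_stdNormalPdf.continuousAt).const_add _

lemma tendsto_stdNormalCdf_atBot : Tendsto stdNormalCdf atBot (𝓝 0) := by
  have h := (intervalIntegral_tendsto_integral_Iic 0 integrable_stdNormalPdf.integrableOn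
    tendsto_id).const_sub (∫ u in Iic 0, stdNormalPdf u)
  rw [sub_self] at h
  refine h.congr fun z => ?_
  rw [stdNormalCdf_eq_integral_Iic, ← intervalIntegral.integral_Iic_sub_Iic
    integrable_stdNormalPdf.integrableOn integrable_stdNormalPdf.integrableOn]
  simp

lemma hasDerivAt_gaussKer (σ t m y : ℝ) :
    HasDerivAt (gaussKer σ t m) (gaussKer σ t m y * ((m - y) / (σ ^ 2 * t))) y := by
  have h := ((((hasDerivAt_id y).const_sub m).pow 2).neg.div_const (2 * σ ^ 2 * t)).exp.const_mul
    (√(2 * π * σ ^ 2 * t))⁻¹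
  refine h.congr_deriv ?_
  simp only [gaussKer, id, Pi.pow_apply, Pi.neg_apply]
  ring

lemma gaussKer_eq_stdNormalPdf {σ t : ℝ} (hσ : 0 < σ) (ht : 0 < t) (m y : ℝ) :
    gaussKer σ t m y = (σ * √t)⁻¹ * stdNormalPdf ((y - m) / (σ * √t)) := by
  have hsq : (σ * √t) ^ 2 = σ ^ 2 * t := by rw [mul_pow, sq_sqrt ht.le]
  have hsqrt : √(2 * π * σ ^ 2 * t) = √(2 * π) * (σ * √t) := by
    rw [mul_assoc _ (σ ^ 2), ← hsq, sqrt_mul (by positivity), sqrt_sq (by positivity)]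
  rw [gaussKer, stdNormalPdf, hsqrt, div_pow, hsq, mul_inv, ← neg_sub y m, neg_sq]
  ring_nf

lemma gaussKer_mul_exp_sub {σ t : ℝ} (hσ : σ ≠ 0) (ht : t ≠ 0) (m a y : ℝ) :
    gaussKer σ t m y * exp (a - y)
      = exp (a - m + σ ^ 2 * t / 2) * gaussKer σ t (m - σ ^ 2 * t) y := by
  simp only [gaussKer]
  rw [mul_assoc, ← exp_add, mul_left_comm, ← exp_add]
  congr 2
  field_simp
  ring

lemma tendsto_sub_div_atBot {c : ℝ} (hc : 0 < c) (m : ℝ) :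
    Tendsto (fun y => (y - m) / c) atBot atBot :=
  (tendsto_atBot_add_const_right _ (-m) tendsto_id).atBot_div_const hc

section gaussKer

variable {σ t : ℝ}

lemma integrable_gaussKer (hσ : 0 < σ) (ht : 0 < t) (m : ℝ) : Integrable (gaussKer σ t m) := by
  rw [funext (gaussKer_eq_stdNormalPdf hσ ht m)]
  exact ((integrable_stdNormalPdf.comp_div (by positivity)).comp_sub_right m).const_mul _

lemma integrable_sub_mul_gaussKer (hσ : 0 < σ) (ht : 0 < t) (m c : ℝ) :
    Integrable fun y => (c - y) * gaussKer σ t m y := by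
  have hc : σ * √t ≠ 0 := by positivity
  have hlin : Integrable fun y => (y - m) * gaussKer σ t m y := by
    refine ((integrable_mul_stdNormalPdf.comp_div hc).comp_sub_right m).congr
      (.of_forall fun y => ?_)
    simp only [gaussKer_eq_stdNormalPdf hσ ht]
    field_simp
  refine (((integrable_gaussKer hσ ht m).const_mul (c - m)).sub hlin).congr
    (.of_forall fun y => ?_)
  simp only [Pi.sub_apply]
  ring

lemma tendsto_gaussKer_atBot (hσ : 0 < σ) (ht : 0 < t) (m : ℝ) :
    Tendsto (gaussKer σ t m) atBot (𝓝 0) := by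
  rw [funext (gaussKer_eq_stdNormalPdf hσ ht m), ← mul_zero (σ * √t)⁻¹]
  exact (tendsto_stdNormalPdf_atBot.comp (tendsto_sub_div_atBot (by positivity) m)).const_mul _

lemma integral_Iic_gaussKer (hσ : 0 < σ) (ht : 0 < t) (m b : ℝ) :
    ∫ y in Iic b, gaussKer σ t m y = stdNormalCdf ((b - m) / (σ * √t)) := by
  have hderiv (y : ℝ) :
      HasDerivAt (fun y => stdNormalCdf ((y - m) / (σ * √t))) (gaussKer σ t m y) y := by
    rw [gaussKer_eq_stdNormalPdf hσ ht]
    exact ((hasDerivAt_stdNormalCdf _).comp y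
      (((hasDerivAt_id' y).sub_const m).div_const _)).congr_deriv (by ring)
  rw [integral_Iic_of_hasDerivAt_of_tendsto' (fun y _ => hderiv y)
    (integrable_gaussKer hσ ht m).integrableOn
    (tendsto_stdNormalCdf_atBot.comp (tendsto_sub_div_atBot (by positivity) m)), sub_zero]

lemma tendsto_exp_sub_mul_gaussKer_atBot (hσ : 0 < σ) (ht : 0 < t) (m a K' : ℝ) :
    Tendsto (fun y => (exp (a - y) - K') * gaussKer σ t m y) atBot (𝓝 0) := by
  have h := ((tendsto_gaussKer_atBot hσ ht (m - σ ^ 2 * t)).const_mul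
    (exp (a - m + σ ^ 2 * t / 2))).sub ((tendsto_gaussKer_atBot hσ ht m).const_mul K')
  rw [mul_zero, mul_zero, sub_zero] at h
  refine h.congr fun y => ?_
  rw [← gaussKer_mul_exp_sub hσ.ne' ht.ne']
  ring

lemma integrable_exp_sub_mul_deriv_gaussKer (hσ : 0 < σ) (ht : 0 < t) (m a K' : ℝ) :
    Integrable fun y => (exp (a - y) - K') * (gaussKer σ t m y * ((m - y) / (σ ^ 2 * t))) := by
  refine (((integrable_sub_mul_gaussKer hσ ht (m - σ ^ 2 * t) m).const_mul
    (exp (a - m + σ ^ 2 * t / 2) / (σ ^ 2 * t))).sub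
    ((integrable_sub_mul_gaussKer hσ ht m m).const_mul (K' / (σ ^ 2 * t)))).congr
    (.of_forall fun y => ?_)
  simp only [Pi.sub_apply]
  linear_combination (-(m - y) / (σ ^ 2 * t)) * gaussKer_mul_exp_sub hσ.ne' ht.ne' m a y

lemma integral_Iic_deriv_gaussKer_mul_exp_sub (hσ : 0 < σ) (ht : 0 < t) (m a : ℝ)
    {K' : ℝ} (hK' : 0 < K') :
    ∫ y in Iic (a - log K'), gaussKer σ t m y * ((m - y) / (σ ^ 2 * t)) * (exp (a - y) - K')
      = exp (a - m + σ ^ 2 * t / 2)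
        * stdNormalCdf ((a - log K' - m + σ ^ 2 * t) / (σ * √t)) := by
  set b := a - log K'
  have hshift (y : ℝ) : gaussKer σ t m y * exp (a - y)
      = exp (a - m + σ ^ 2 * t / 2) * gaussKer σ t (m - σ ^ 2 * t) y :=
    gaussKer_mul_exp_sub hσ.ne' ht.ne' m a y
  have hu (y : ℝ) : HasDerivAt (fun y => exp (a - y) - K') (-exp (a - y)) y :=
    (((hasDerivAt_id' y).const_sub a).exp.sub_const K').congr_deriv (by ring)
  have hu'v_int : Integrable fun y => -exp (a - y) * gaussKer σ t m y := by
    refine (((integrable_gaussKer hσ ht (m - σ ^ 2 * t)).const_mul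
      (exp (a - m + σ ^ 2 * t / 2))).neg).congr (.of_forall fun y => ?_)
    simp only [Pi.neg_apply, neg_mul, mul_comm (exp _), hshift]
  have h_boundary :
      Tendsto (fun y => (exp (a - y) - K') * gaussKer σ t m y) (𝓝[<] b) (𝓝 0) := by
    have hcont : ContinuousAt (fun y => (exp (a - y) - K') * gaussKer σ t m y) b :=
      (hu b).continuousAt.mul (hasDerivAt_gaussKer σ t m b).continuousAt
    have hb : exp (a - b) = K' := by simp [b, exp_log hK']
    simpa [hb] using hcont.tendsto.mono_left nhdsWithin_le_nhds
  have hparts := integral_Iic_mul_deriv_eq_deriv_mul (fun y _ => hu y)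
    (fun y _ => hasDerivAt_gaussKer σ t m y)
    (integrable_exp_sub_mul_deriv_gaussKer hσ ht m a K').integrableOn hu'v_int.integrableOn
    h_boundary (tendsto_exp_sub_mul_gaussKer_atBot hσ ht m a K')
  calc ∫ y in Iic b, gaussKer σ t m y * ((m - y) / (σ ^ 2 * t)) * (exp (a - y) - K')
      = ∫ y in Iic b, (exp (a - y) - K') * (gaussKer σ t m y * ((m - y) / (σ ^ 2 * t))) := by
        simp only [mul_comm _ (exp _ - K')]
    _ = ∫ y in Iic b, exp (a - m + σ ^ 2 * t / 2) * gaussKer σ t (m - σ ^ 2 * t) y := by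
        rw [hparts]
        simp only [neg_mul, mul_comm (exp _), hshift, integral_neg]
        ring
    _ = exp (a - m + σ ^ 2 * t / 2) * stdNormalCdf ((b - m + σ ^ 2 * t) / (σ * √t)) := by
        rw [integral_const_mul, integral_Iic_gaussKer hσ ht, sub_sub_eq_add_sub,
          add_sub_right_comm]

end gaussKer

lemma integral_mul_max_exp_sub_eq_integral_Iic (g : ℝ → ℝ) (a : ℝ) {K' : ℝ} (hK' : 0 < K') :
    ∫ y, g y * max (exp (a - y) - K') 0
      = ∫ y in Iic (a - log K'), g y * (exp (a - y) - K') := by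
  have hpos (y : ℝ) : 0 ≤ exp (a - y) - K' ↔ y ∈ Iic (a - log K') := by
    rw [sub_nonneg, ← log_le_iff_le_exp hK', mem_Iic]
    constructor <;> intro h <;> linarith
  rw [← setIntegral_eq_integral_of_forall_compl_eq_zero fun y hy => by
    rw [max_eq_right (not_le.1 (mt (hpos y).1 hy)).le, mul_zero]]
  exact setIntegral_congr_fun measurableSet_Iic fun y hy => by rw [max_eq_left ((hpos y).2 hy)]

theorem stmt_17_general (σ t μ K K' x : ℝ) (hσ : 0 < σ) (ht : 0 < t) (hK' : 0 < K') :
    (∫ y : ℝ, (-μ) * deriv (fun y' => gaussKer σ t x y') y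
        * max (Real.exp (2 * Real.log K - y) - K') 0)
      = -μ * Real.exp (2 * Real.log K - x + σ ^ 2 * t / 2)
          * stdNormalCdf ((2 * Real.log K - Real.log K' - x + σ ^ 2 * t) / (σ * Real.sqrt t)) := by
  have hderiv (y : ℝ) : deriv (fun y' => gaussKer σ t x y') y
      = gaussKer σ t x y * ((x - y) / (σ ^ 2 * t)) := (hasDerivAt_gaussKer σ t x y).deriv
  simp only [hderiv, mul_assoc (-μ)]
  rw [integral_const_mul, integral_mul_max_exp_sub_eq_integral_Iic _ _ hK',
    integral_Iic_deriv_gaussKer_mul_exp_sub hσ ht x _ hK']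

/-- For `σ, t > 0`, `μ ∈ ℝ`, `K, K' > 0` and `x ∈ ℝ`,
`∫ (−μ) ∂_y[p_σ(t,x,y)] max(e^{2 log K − y} − K', 0) dy
  = −μ e^{2 log K − x + σ²t/2} 𝒩((2 log K − log K' − x + σ²t)/(σ√t))`. -/
theorem stmt_17 (σ t μ K K' x : ℝ) (hσ : 0 < σ) (ht : 0 < t) (hK : 0 < K) (hK' : 0 < K') :
    (∫ y : ℝ, (-μ) * deriv (fun y' => gaussKer σ t x y') y
        * max (Real.exp (2 * Real.log K - y) - K') 0)
      = -μ * Real.exp (2 * Real.log K - x + σ ^ 2 * t / 2)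
          * stdNormalCdf ((2 * Real.log K - Real.log K' - x + σ ^ 2 * t) / (σ * Real.sqrt t)) :=
  stmt_17_general σ t μ K K' x hσ ht hK'
end
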